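/- arXiv:0812.2990 — 2 statements merged into one kernel-verified Lean document; each statement's English description precedes it below -/
import Mathlib

section
/- Let H be a hypergraph and {A, B} a bipartition of its edge set with border S = δ({A,B}). Let H/A denote the hypergraph obtained from H by replacing all edges of A by a single hyperedge with vertex set S (deleting vertices only incident to edges of A and not in S), and similarly H/B. Then tw(H) <= max(tw(H/A), tw(H/B)). -/
open Set
open scoped Classical

universe u
variable {V : Type u}

/-- Border of an edge-subset `A` of edge set `E`: vertices incident with an
edge of `A` and with an edge of `E \ A`. -/
def border (E A : Set (Set V)) : Set V :=
  {v | (∃ e ∈ E ∩ A, v ∈ e) ∧ ∃ e ∈ E \ A, v ∈ e}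

/-- A tree-decomposition of the hypergraph with vertex set `Vs` and edge set `E`. -/
structure TreeDecomp (Vs : Set V) (E : Set (Set V)) : Type (u + 1) where
  ι : Type
  T : SimpleGraph ι
  isTree : T.IsTree
  bag : ι → Set V
  cover_vertex : ∀ v ∈ Vs, ∃ i, v ∈ bag i
  cover_edge : ∀ e ∈ E, ∃ i, e ⊆ bag i
  bag_conn : ∀ v : V, {i | v ∈ bag i}.Nonempty → (T.induce {i | v ∈ bag i}).Connected

noncomputable def TreeDecomp.width {Vs : Set V} {E : Set (Set V)}
    (d : TreeDecomp Vs E) : ℕ∞ :=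
  ⨆ i, ((d.bag i).encard - 1)

/-- Tree-width of a hypergraph. -/
noncomputable def tw (Vs : Set V) (E : Set (Set V)) : ℕ∞ :=
  ⨅ d : TreeDecomp Vs E, d.width

/-- Connectivity by a chain of edges. -/
def hconn (E : Set (Set V)) (u w : V) : Prop :=
  Relation.ReflTransGen (fun a b => ∃ e ∈ E, a ∈ e ∧ b ∈ e) u w

/-- An edge set is connected if its sub-hypergraph is connected. -/
def EdgeConnected (X : Set (Set V)) : Prop :=
  ∀ u ∈ ⋃₀ X, ∀ w ∈ ⋃₀ X, hconn X u w

/-- Edges of `H - S`: nonempty traces `e \ S`. -/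
def edgesMinus (E : Set (Set V)) (S : Set V) : Set (Set V) :=
  {x | ∃ e ∈ E, (e \ S).Nonempty ∧ x = e \ S}

/-- `C` is a connected component of the hypergraph with vertex set `W` and edges `E'`. -/
def IsConnCompOf (W : Set V) (E' : Set (Set V)) (C : Set V) : Prop :=
  ∃ u ∈ W, C = {w ∈ W | hconn E' u w}

/-- `e` is a cut-edge of the hypergraph with edge set `E`. -/
def IsCutEdge (E : Set (Set V)) (e : Set V) : Prop :=
  e ∈ E ∧ ∃ u ∈ ⋃₀ (E \ {e}), ∃ w ∈ ⋃₀ (E \ {e}), ¬ hconn (E \ {e}) u w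

/-- Edge set of `H/A`: the edges of `A` replaced by one hyperedge on the border. -/
def contractE (E A : Set (Set V)) : Set (Set V) := (E \ A) ∪ {border E A}

/-- Vertex set of `H/A`. -/
def contractV (Vs : Set V) (E A : Set (Set V)) : Set V := (Vs \ ⋃₀ A) ∪ border E A

/-- An `S`-bridge: a minimal nonempty edge set whose border lies in `S`. -/
def IsSBridge (E : Set (Set V)) (S : Set V) (X : Set (Set V)) : Prop :=
  X.Nonempty ∧ X ⊆ E ∧ border E X ⊆ S ∧
    ∀ Y : Set (Set V), Y.Nonempty → Y ⊆ X → border E Y ⊆ S → Y = X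

/-- A p-tree of the hypergraph with edge set `E`: a tree whose internal nodes
have degree 3 and whose leaves are labelled bijectively with the edges. -/
structure PTree (E : Set (Set V)) : Type (u + 1) where
  ι : Type
  T : SimpleGraph ι
  isTree : T.IsTree
  leafLabel : {i : ι // (T.neighborSet i).ncard = 1} ≃ E
  deg : ∀ i : ι, (T.neighborSet i).ncard = 1 ∨ (T.neighborSet i).ncard = 3

/-- The bag at a node of a p-tree: a leaf gets its edge; an internal node gets
the border of the tripartition of the edges, i.e. all vertices lying on two
edges whose leaves are separated by the node. -/
noncomputable def PTree.bag {E : Set (Set V)} (P : PTree E) (i : P.ι) : Set V :=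
  if h : (P.T.neighborSet i).ncard = 1 then (P.leafLabel ⟨i, h⟩ : Set V)
  else {u | ∃ l1 l2 : {j : P.ι // (P.T.neighborSet j).ncard = 1},
    u ∈ (P.leafLabel l1 : Set V) ∧ u ∈ (P.leafLabel l2 : Set V) ∧
    ∀ p : P.T.Walk l1.1 l2.1, i ∈ p.support}

noncomputable def PTree.width {E : Set (Set V)} (P : PTree E) : ℕ∞ :=
  ⨆ i, ((P.bag i).encard - 1)

/-- The part of the edge tripartition at node `i` lying on the side of `l`. -/
def PTree.sideOf {E : Set (Set V)} (P : PTree E) (i l : P.ι) : Set (Set V) :=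
  {e | ∃ h : e ∈ E, ∃ p : P.T.Walk (P.leafLabel.symm ⟨e, h⟩).1 l, i ∉ p.support}

def PTree.IsPartAt {E : Set (Set V)} (P : PTree E) (i : P.ι) (X : Set (Set V)) : Prop :=
  ∃ l, P.T.Adj i l ∧ X = P.sideOf i l

/-!
Take tree-decompositions of `H/A` and `H/B`. The border `S` is an edge of both contractions, so
each has a bag containing `S`. Cut the bags of the first down to the vertices outside `⋃ A` plus
`S`, those of the second down to `⋃ A`, and join the two trees by an edge between the bags
containing `S`. The two sides now share only vertices of `S`, which sit in both joined bags, so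
the subtree condition survives; every edge of `A` is covered on the second side, every other edge
and every vertex outside `⋃ A` on the first. No bag grew, so the width is at most the larger one.
-/

namespace SimpleGraph

variable {α β : Type*} {G : SimpleGraph α} {H : SimpleGraph β}

theorem Reachable.lift (f : α → β) (hf : ∀ ⦃x y⦄, G.Adj x y → H.Reachable (f x) (f y))
    {u v : α} (h : G.Reachable u v) : H.Reachable (f u) (f v) := by
  rw [reachable_iff_reflTransGen] at h ⊢
  exact h.lift' f fun x y hxy => (reachable_iff_reflTransGen _ _).mp (hf hxy)

theorem isBridge_sum_inl {a b : α} (h : G.IsBridge s(a, b)) :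
    (G ⊕g H).IsBridge s(.inl a, .inl b) := by
  rw [isBridge_iff] at h ⊢
  refine fun hr => h (hr.lift (Sum.elim id fun _ => a) ?_)
  rintro (x | x) (y | y) hxy
  · exact Adj.reachable (by simpa using hxy)
  · simp at hxy
  · simp at hxy
  · rfl

theorem isBridge_sum_inr {a b : β} (h : H.IsBridge s(a, b)) :
    (G ⊕g H).IsBridge s(.inr a, .inr b) := by
  rw [isBridge_iff] at h ⊢
  refine fun hr => h (hr.lift (Sum.elim (fun _ => a) id) ?_)
  rintro (x | x) (y | y) hxy
  · rfl
  · simp at hxy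
  · simp at hxy
  · exact Adj.reachable (by simpa using hxy)

theorem IsAcyclic.sum (hG : G.IsAcyclic) (hH : H.IsAcyclic) : (G ⊕g H).IsAcyclic := by
  rw [isAcyclic_iff_forall_adj_isBridge] at hG hH ⊢
  rintro (x | x) (y | y) hxy
  · exact isBridge_sum_inl (hG (by simpa using hxy))
  · simp at hxy
  · simp at hxy
  · exact isBridge_sum_inr (hH (by simpa using hxy))

theorem IsTree.sum_sup_edge (hG : G.IsTree) (hH : H.IsTree) (a : α) (b : β) :
    (G.sum H ⊔ edge (Sum.inl a) (Sum.inr b)).IsTree :=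
  ⟨hG.connected.sum_sup_edge hH.connected,
    (hG.isAcyclic.sum hH.isAcyclic).sup_edge_of_not_reachable (not_reachable_sum_inl_inr a b)⟩

end SimpleGraph

namespace TreeDecomp

variable {Vs Vs₁ Vs₂ : Set V} {E E₁ E₂ : Set (Set V)}

def restrict (d : TreeDecomp Vs E) (W : Set V) : TreeDecomp (Vs ∩ W) {e ∈ E | e ⊆ W} where
  ι := d.ι
  T := d.T
  isTree := d.isTree
  bag i := d.bag i ∩ W
  cover_vertex v hv := (d.cover_vertex v hv.1).imp fun _ hi => ⟨hi, hv.2⟩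
  cover_edge e he := (d.cover_edge e he.1).imp fun _ hi => subset_inter hi he.2
  bag_conn v := by
    rintro ⟨i, hvi, hvW⟩
    have hbags : {i | v ∈ d.bag i ∩ W} = {i | v ∈ d.bag i} := by
      ext j
      simp [hvW]
    show (d.T.induce {i | v ∈ d.bag i ∩ W}).Connected
    rw [hbags]
    exact d.bag_conn v ⟨i, hvi⟩

theorem width_restrict_le (d : TreeDecomp Vs E) (W : Set V) : (d.restrict W).width ≤ d.width :=
  iSup_mono fun _ => tsub_le_tsub_right (encard_mono inter_subset_left) 1

noncomputable def glue (d₁ : TreeDecomp Vs₁ E₁) (d₂ : TreeDecomp Vs₂ E₂) (i₁ : d₁.ι) (i₂ : d₂.ι)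
    (h : ∀ v, (∃ i, v ∈ d₁.bag i) → (∃ j, v ∈ d₂.bag j) → v ∈ d₁.bag i₁ ∧ v ∈ d₂.bag i₂) :
    TreeDecomp (Vs₁ ∪ Vs₂) (E₁ ∪ E₂) where
  ι := d₁.ι ⊕ d₂.ι
  T := d₁.T.sum d₂.T ⊔ SimpleGraph.edge (Sum.inl i₁) (Sum.inr i₂)
  isTree := d₁.isTree.sum_sup_edge d₂.isTree i₁ i₂
  bag := Sum.elim d₁.bag d₂.bag
  cover_vertex v hv := hv.elim
    (fun hv => (d₁.cover_vertex v hv).imp' Sum.inl fun _ => id)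
    (fun hv => (d₂.cover_vertex v hv).imp' Sum.inr fun _ => id)
  cover_edge e he := he.elim
    (fun he => (d₁.cover_edge e he).imp' Sum.inl fun _ => id)
    (fun he => (d₂.cover_edge e he).imp' Sum.inr fun _ => id)
  bag_conn v hv := by
    set T := d₁.T.sum d₂.T ⊔ SimpleGraph.edge (Sum.inl i₁) (Sum.inr i₂)
    set M := {x | v ∈ Sum.elim d₁.bag d₂.bag x}
    have left {a a'} (ha : v ∈ d₁.bag a) (ha' : v ∈ d₁.bag a') :
        (T.induce M).Reachable ⟨Sum.inl a, ha⟩ ⟨Sum.inl a', ha'⟩ :=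
      ((d₁.bag_conn v ⟨a, ha⟩).preconnected ⟨a, ha⟩ ⟨a', ha'⟩).lift
        (fun x => (⟨Sum.inl x.1, x.2⟩ : M))
        fun _ _ hxy => SimpleGraph.Adj.reachable (Or.inl (by simpa using hxy))
    have right {b b'} (hb : v ∈ d₂.bag b) (hb' : v ∈ d₂.bag b') :
        (T.induce M).Reachable ⟨Sum.inr b, hb⟩ ⟨Sum.inr b', hb'⟩ :=
      ((d₂.bag_conn v ⟨b, hb⟩).preconnected ⟨b, hb⟩ ⟨b', hb'⟩).lift
        (fun x => (⟨Sum.inr x.1, x.2⟩ : M))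
        fun _ _ hxy => SimpleGraph.Adj.reachable (Or.inl (by simpa using hxy))
    have cross {a b} (ha : v ∈ d₁.bag a) (hb : v ∈ d₂.bag b) :
        (T.induce M).Reachable ⟨Sum.inl a, ha⟩ ⟨Sum.inr b, hb⟩ := by
      obtain ⟨h₁, h₂⟩ := h v ⟨a, ha⟩ ⟨b, hb⟩
      have hbridge : (T.induce M).Adj ⟨Sum.inl i₁, h₁⟩ ⟨Sum.inr i₂, h₂⟩ :=
        Or.inr (by simp [SimpleGraph.edge_adj])
      exact ((left ha h₁).trans hbridge.reachable).trans (right h₂ hb)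
    refine (SimpleGraph.connected_iff _).mpr ⟨?_, hv.to_subtype⟩
    rintro ⟨a | a, hx⟩ ⟨b | b, hy⟩
    exacts [left hx hy, cross hx hy, (cross hy hx).symm, right hx hy]

theorem width_glue (d₁ : TreeDecomp Vs₁ E₁) (d₂ : TreeDecomp Vs₂ E₂) (i₁ : d₁.ι) (i₂ : d₂.ι)
    (h : ∀ v, (∃ i, v ∈ d₁.bag i) → (∃ j, v ∈ d₂.bag j) → v ∈ d₁.bag i₁ ∧ v ∈ d₂.bag i₂) :
    (glue d₁ d₂ i₁ i₂ h).width = max d₁.width d₂.width :=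
  iSup_sum

end TreeDecomp

theorem tw_le_width_of_subset {Vs Vs' : Set V} {E E' : Set (Set V)} (d : TreeDecomp Vs E)
    (hV : Vs' ⊆ Vs) (hE : E' ⊆ E) : tw Vs' E' ≤ d.width :=
  iInf_le_of_le { d with
    cover_vertex := fun v hv => d.cover_vertex v (hV hv)
    cover_edge := fun e he => d.cover_edge e (hE he) } le_rfl

section Contraction

variable {Vs : Set V} {E A : Set (Set V)}

theorem border_sdiff_self : border E (E \ A) = border E A := by
  unfold border
  rw [sdiff_sdiff_right_self, inter_eq_right.mpr sdiff_subset]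
  ext v
  exact and_comm

theorem border_subset_sUnion : border E A ⊆ ⋃₀ A :=
  fun _ ⟨⟨e, he, hve⟩, _⟩ => ⟨e, he.2, hve⟩

theorem mem_border {v : V} {e f : Set V} (he : e ∈ E ∩ A) (hf : f ∈ E \ A) (hve : v ∈ e)
    (hvf : v ∈ f) : v ∈ border E A :=
  ⟨⟨e, he, hve⟩, f, hf, hvf⟩

theorem subset_union_contractV (hA : A ⊆ E) :
    Vs ⊆ (contractV Vs E A ∩ ((⋃₀ A)ᶜ ∪ border E A)) ∪ (contractV Vs E (E \ A) ∩ ⋃₀ A) := by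
  intro v hv
  by_cases hvA : v ∈ ⋃₀ A
  · refine Or.inr ⟨?_, hvA⟩
    by_cases hvB : v ∈ ⋃₀ (E \ A)
    · obtain ⟨e, he, hve⟩ := hvA
      obtain ⟨f, hf, hvf⟩ := hvB
      refine Or.inr ?_
      rw [border_sdiff_self]
      exact mem_border ⟨hA he, he⟩ hf hve hvf
    · exact Or.inl ⟨hv, hvB⟩
  · exact Or.inl ⟨Or.inl ⟨hv, hvA⟩, Or.inl hvA⟩

theorem subset_union_contractE (hA : A ⊆ E) :
    E ⊆ {e ∈ contractE E A | e ⊆ (⋃₀ A)ᶜ ∪ border E A} ∪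
      {e ∈ contractE E (E \ A) | e ⊆ ⋃₀ A} := by
  intro e he
  by_cases heA : e ∈ A
  · exact Or.inr ⟨Or.inl ⟨he, fun h => h.2 heA⟩, subset_sUnion_of_mem heA⟩
  · refine Or.inl ⟨Or.inl ⟨he, heA⟩, fun v hve => ?_⟩
    by_cases hvA : v ∈ ⋃₀ A
    · obtain ⟨f, hf, hvf⟩ := hvA
      exact Or.inr (mem_border ⟨hA hf, hf⟩ ⟨he, heA⟩ hvf hve)
    · exact Or.inl hvA

end Contraction

theorem tw_le_max_width {Vs : Set V} {E A : Set (Set V)} (hA : A ⊆ E)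
    (d₁ : TreeDecomp (contractV Vs E A) (contractE E A))
    (d₂ : TreeDecomp (contractV Vs E (E \ A)) (contractE E (E \ A))) :
    tw Vs E ≤ max d₁.width d₂.width := by
  set S := border E A
  obtain ⟨i₁, hi₁⟩ := d₁.cover_edge S (Or.inr rfl)
  obtain ⟨i₂, hi₂⟩ := d₂.cover_edge (border E (E \ A)) (Or.inr rfl)
  rw [border_sdiff_self] at hi₂
  have hS : ((⋃₀ A)ᶜ ∪ S) ∩ ⋃₀ A ⊆ S := fun v ⟨hv₁, hv₂⟩ => hv₁.resolve_left (· hv₂)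
  let d := (d₁.restrict ((⋃₀ A)ᶜ ∪ S)).glue (d₂.restrict (⋃₀ A)) i₁ i₂
    fun v ⟨_, _, hv₁⟩ ⟨_, _, hv₂⟩ =>
      have hvS := hS ⟨hv₁, hv₂⟩
      ⟨⟨hi₁ hvS, hv₁⟩, hi₂ hvS, border_subset_sUnion hvS⟩
  calc tw Vs E ≤ d.width := tw_le_width_of_subset d (subset_union_contractV hA)
        (subset_union_contractE hA)
    _ = max (d₁.restrict _).width (d₂.restrict _).width := TreeDecomp.width_glue ..
    _ ≤ max d₁.width d₂.width := max_le_max (d₁.width_restrict_le _) (d₂.width_restrict_le _)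

theorem tw_le_max_contractions_general
    (Vs : Set V) (E A : Set (Set V))
    (hA : A ⊆ E) :
    tw Vs E ≤ max (tw (contractV Vs E A) (contractE E A))
                  (tw (contractV Vs E (E \ A)) (contractE E (E \ A))) := by
  refine (le_iInf₂ fun d₁ d₂ => tw_le_max_width hA d₁ d₂).trans_eq ?_
  rw [tw, tw, iInf_sup_eq]
  simp_rw [sup_iInf_eq]

/-- For a bipartition `{A, E \ A}` of the edge set of `H`,
`tw(H) ≤ max (tw(H/A), tw(H/B))`. -/
theorem tw_le_max_contractions
    (Vs : Set V) (E A : Set (Set V)) (hE : ∀ e ∈ E, e ⊆ Vs)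
    (hA : A ⊆ E) (hAne : A.Nonempty) (hBne : (E \ A).Nonempty) :
    tw Vs E ≤ max (tw (contractV Vs E A) (contractE E A))
                  (tw (contractV Vs E (E \ A)) (contractE E (E \ A))) :=
  tw_le_max_contractions_general Vs E A hA
end

section
/- Let T be a p-tree of a hypergraph H = (V, E), i.e., a tree whose internal nodes have degree 3 and whose leaves are labelled bijectively with the edges of H. Label each internal node v with the border δ(μ_v) of the tripartition μ_v of E obtained by removing v from T, and label each leaf with its edge. Then this labelling is a tree-decomposition of H. -/
open Set
open scoped Classical

universe u
variable {V : Type u}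

namespace SimpleGraph

variable {ι : Type*} {G : SimpleGraph ι}

def Separates (G : SimpleGraph ι) (k a b : ι) : Prop :=
  ∀ p : G.Walk a b, k ∈ p.support

lemma Separates.left_or_right {k a b : ι} (h : G.Separates k a b) (c : ι) :
    G.Separates k a c ∨ G.Separates k b c := by
  by_contra! hac
  simp only [Separates, not_forall] at hac
  obtain ⟨⟨p, hp⟩, ⟨q, hq⟩⟩ := hac
  have hk := h (p.append q.reverse)
  simp only [Walk.mem_support_append_iff, Walk.support_reverse, List.mem_reverse] at hk
  tauto

lemma Separates.of_walks_avoiding {k a b a' b' : ι} (h : G.Separates k a b)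
    (p : G.Walk a a') (q : G.Walk b b') (hp : k ∉ p.support) (hq : k ∉ q.support) :
    G.Separates k a' b' := by
  intro r
  by_contra hr
  have hk := h (p.append (r.append q.reverse))
  simp only [Walk.mem_support_append_iff, Walk.support_reverse, List.mem_reverse] at hk
  tauto

/-- The part of a path from `a` to `b` before the separating vertex `k` avoids `b`. -/
lemma Preconnected.exists_walk_avoiding_of_separates (hG : G.Preconnected) {k a b : ι}
    (h : G.Separates k a b) (hkb : k ≠ b) : ∃ p : G.Walk a k, b ∉ p.support := by
  obtain ⟨p, hp⟩ := hG.exists_isPath a b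
  exact ⟨p.takeUntil k (h p), Walk.endpoint_notMem_support_takeUntil hp (h p) hkb.symm⟩

lemma IsAcyclic.separates_of_mem_support_isPath (hG : G.IsAcyclic) {k a b : ι}
    {p : G.Walk a b} (hp : p.IsPath) (hk : k ∈ p.support) : G.Separates k a b := by
  intro q
  have hpq : (⟨p, hp⟩ : G.Path a b) = q.toPath := (hG.subsingleton_path a b).elim _ _
  exact q.support_toPath_subset_support (hpq ▸ hk)

lemma Preconnected.induce_connected_of_isPath_support_subset (hG : G.Preconnected)
    {s : Set ι} (hs : s.Nonempty)
    (h : ∀ a ∈ s, ∀ b ∈ s, ∀ p : G.Walk a b, p.IsPath → ∀ x ∈ p.support, x ∈ s) :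
    (G.induce s).Connected := by
  rw [connected_iff]
  refine ⟨?_, hs.to_subtype⟩
  rintro ⟨a, ha⟩ ⟨b, hb⟩
  obtain ⟨p, hp⟩ := hG.exists_isPath a b
  exact ⟨p.induce s (h a ha b hb p hp)⟩

end SimpleGraph

namespace PTree

open SimpleGraph

variable {E : Set (Set V)} (P : PTree E)

lemma bag_leafLabel_symm {e : Set V} (he : e ∈ E) :
    P.bag (P.leafLabel.symm ⟨e, he⟩).1 = e := by
  rw [PTree.bag, dif_pos (P.leafLabel.symm ⟨e, he⟩).2]
  simp

lemma mem_bag_of_ncard_ne_one {i : P.ι} (hi : (P.T.neighborSet i).ncard ≠ 1) {v : V} :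
    v ∈ P.bag i ↔ ∃ l1 l2 : {j : P.ι // (P.T.neighborSet j).ncard = 1},
      v ∈ (P.leafLabel l1 : Set V) ∧ v ∈ (P.leafLabel l2 : Set V) ∧ P.T.Separates i l1 l2 := by
  rw [PTree.bag, dif_neg hi]
  rfl

lemma exists_leaf_separates_of_mem_bag {v : V} {i : P.ι} (hv : v ∈ P.bag i) (k : P.ι) :
    ∃ l : {j : P.ι // (P.T.neighborSet j).ncard = 1},
      v ∈ (P.leafLabel l : Set V) ∧ P.T.Separates i l k := by
  by_cases hi : (P.T.neighborSet i).ncard = 1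
  · refine ⟨⟨i, hi⟩, ?_, fun p => p.start_mem_support⟩
    rwa [PTree.bag, dif_pos hi] at hv
  · obtain ⟨l1, l2, hv1, hv2, hsep⟩ := (P.mem_bag_of_ncard_ne_one hi).1 hv
    rcases hsep.left_or_right k with h1 | h2
    · exact ⟨l1, hv1, h1⟩
    · exact ⟨l2, hv2, h2⟩

/-- A node `k` strictly between `i` and `j` is internal, and leaves carrying `v` behind `i`
and behind `j` are separated by `k`, since otherwise `i` and `j` would be joined avoiding `k`. -/
lemma mem_bag_of_mem_support_isPath {v : V} {i j k : P.ι} (hi : v ∈ P.bag i)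
    (hj : v ∈ P.bag j) {p : P.T.Walk i j} (hp : p.IsPath) (hk : k ∈ p.support) :
    v ∈ P.bag k := by
  by_cases hki : k = i
  · exact hki ▸ hi
  by_cases hkj : k = j
  · exact hkj ▸ hj
  have hconn := P.isTree.connected.preconnected
  have hk_internal : (P.T.neighborSet k).ncard ≠ 1 := by
    intro h1
    obtain ⟨c, hc⟩ := Set.ncard_eq_one.mp h1
    exact hp.isTrail.not_mem_support_of_subsingleton_neighborSet hki hkj
      (hc ▸ Set.subsingleton_singleton) hk
  obtain ⟨l1, hv1, hsep1⟩ := P.exists_leaf_separates_of_mem_bag hi k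
  obtain ⟨l2, hv2, hsep2⟩ := P.exists_leaf_separates_of_mem_bag hj k
  obtain ⟨q1, hq1⟩ := hconn.exists_walk_avoiding_of_separates hsep1 (Ne.symm hki)
  obtain ⟨q2, hq2⟩ := hconn.exists_walk_avoiding_of_separates hsep2 (Ne.symm hkj)
  have hsep : P.T.Separates k i j := P.isTree.isAcyclic.separates_of_mem_support_isPath hp hk
  refine (P.mem_bag_of_ncard_ne_one hk_internal).2 ⟨l1, l2, hv1, hv2, ?_⟩
  exact hsep.of_walks_avoiding q1.reverse q2.reverse (by simpa using hq1) (by simpa using hq2)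

end PTree

/-- Labelling each internal node of a p-tree with the border of its edge
tripartition and each leaf with its edge yields a tree-decomposition of `H`:
every vertex and edge is covered, and occurrence sets of vertices are connected. -/
theorem pTree_is_treeDecomp (E : Set (Set V)) (P : PTree E) :
    (∀ v ∈ ⋃₀ E, ∃ i : P.ι, v ∈ P.bag i) ∧
    (∀ e ∈ E, ∃ i : P.ι, e ⊆ P.bag i) ∧
    (∀ v : V, {i : P.ι | v ∈ P.bag i}.Nonempty →
      (P.T.induce {i : P.ι | v ∈ P.bag i}).Connected) := by
  refine ⟨?_, ?_, ?_⟩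
  · rintro v ⟨e, he, hv⟩
    exact ⟨_, (P.bag_leafLabel_symm he).symm ▸ hv⟩
  · intro e he
    exact ⟨_, (P.bag_leafLabel_symm he).ge⟩
  · intro v hv
    exact P.isTree.connected.preconnected.induce_connected_of_isPath_support_subset hv
      fun _ ha _ hb _ hp _ hx => P.mem_bag_of_mem_support_isPath ha hb hp hx
end
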